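/- Let X and Y be real Banach spaces. If Z = X ⊕_1 Y has the Ball Small Combination of Slices Property (BSCSP), then X has BSCSP or Y has BSCSP. -/

import Mathlib

open Metric Topology
open scoped ENNReal

noncomputable section

/-- The ballSlice of the closed unit ball of `X` determined by the functional `f` and `α`. -/
def ballSlice (X : Type*) [NormedAddCommGroup X] [NormedSpace ℝ X]
    (f : X →L[ℝ] ℝ) (α : ℝ) : Set X :=
  {x ∈ closedBall (0 : X) 1 | 1 - α < f x}

/-- The convex combination (Minkowski sum) `∑ i, l i • S i` of the sets `S i`. -/
def combSlices {X : Type*} [NormedAddCommGroup X] [NormedSpace ℝ X]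
    {n : ℕ} (l : Fin n → ℝ) (S : Fin n → Set X) : Set X :=
  {x | ∃ v : Fin n → X, (∀ i, v i ∈ S i) ∧ x = ∑ i, l i • v i}

/-- The weak topology `σ(X, X*)` on `X`. -/
def weakTopology (X : Type*) [NormedAddCommGroup X] [NormedSpace ℝ X] :
    TopologicalSpace X :=
  ⨅ f : X →L[ℝ] ℝ, TopologicalSpace.induced f inferInstance

/-- The weak-star topology `σ(X*, X)` on the dual `X*` of `X`. -/
def wstarTopology (X : Type*) [NormedAddCommGroup X] [NormedSpace ℝ X] :
    TopologicalSpace (X →L[ℝ] ℝ) :=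
  ⨅ x : X, TopologicalSpace.induced (fun f : X →L[ℝ] ℝ => f x) inferInstance

/-- Ball Dentable Property: the closed unit ball has slices of arbitrarily small diameter. -/
def BDP (X : Type*) [NormedAddCommGroup X] [NormedSpace ℝ X] : Prop :=
  ∀ ε > 0, ∃ (f : X →L[ℝ] ℝ) (α : ℝ), ‖f‖ = 1 ∧ 0 < α ∧
    Metric.diam (ballSlice X f α) < ε

/-- Ball Huskable Property: the closed unit ball has nonempty relatively weakly open
subsets of arbitrarily small diameter. -/
def BHP (X : Type*) [NormedAddCommGroup X] [NormedSpace ℝ X] : Prop :=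
  ∀ ε > 0, ∃ U : Set X, IsOpen[weakTopology X] U ∧
    (U ∩ closedBall (0 : X) 1).Nonempty ∧
    Metric.diam (U ∩ closedBall (0 : X) 1) < ε

/-- Ball Small Combination of Slices Property: the closed unit ball has convex
combinations of slices of arbitrarily small diameter. -/
def BSCSP (X : Type*) [NormedAddCommGroup X] [NormedSpace ℝ X] : Prop :=
  ∀ ε > 0, ∃ (n : ℕ) (f : Fin n → (X →L[ℝ] ℝ)) (α l : Fin n → ℝ),
    (∀ i, ‖f i‖ = 1) ∧ (∀ i, 0 < α i) ∧ (∀ i, 0 ≤ l i) ∧ (∑ i, l i = 1) ∧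
    Metric.diam (combSlices l (fun i => ballSlice X (f i) (α i))) < ε

/-- The weak-star ballSlice of the closed unit ball of `X*` determined by `x ∈ X` and `α`. -/
def wstarSlice (X : Type*) [NormedAddCommGroup X] [NormedSpace ℝ X]
    (x : X) (α : ℝ) : Set (X →L[ℝ] ℝ) :=
  {f ∈ closedBall (0 : X →L[ℝ] ℝ) 1 | 1 - α < f x}

/-- `X*` has the weak-star Ball Dentable Property: the closed unit ball of `X*` has
weak-star slices of arbitrarily small diameter. -/
def wstarBDP (X : Type*) [NormedAddCommGroup X] [NormedSpace ℝ X] : Prop :=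
  ∀ ε > 0, ∃ (x : X) (α : ℝ), ‖x‖ = 1 ∧ 0 < α ∧
    Metric.diam (wstarSlice X x α) < ε

/-- `X*` has the weak-star Ball Huskable Property: the closed unit ball of `X*` has
nonempty relatively weak-star open subsets of arbitrarily small diameter. -/
def wstarBHP (X : Type*) [NormedAddCommGroup X] [NormedSpace ℝ X] : Prop :=
  ∀ ε > 0, ∃ U : Set (X →L[ℝ] ℝ), IsOpen[wstarTopology X] U ∧
    (U ∩ closedBall (0 : X →L[ℝ] ℝ) 1).Nonempty ∧
    Metric.diam (U ∩ closedBall (0 : X →L[ℝ] ℝ) 1) < ε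

/-- `X*` has the weak-star Ball Small Combination of Slices Property: the closed unit
ball of `X*` has convex combinations of weak-star slices of arbitrarily small diameter. -/
def wstarBSCSP (X : Type*) [NormedAddCommGroup X] [NormedSpace ℝ X] : Prop :=
  ∀ ε > 0, ∃ (n : ℕ) (x : Fin n → X) (α l : Fin n → ℝ),
    (∀ i, ‖x i‖ = 1) ∧ (∀ i, 0 < α i) ∧ (∀ i, 0 ≤ l i) ∧ (∑ i, l i = 1) ∧
    Metric.diam (combSlices l (fun i => wstarSlice X (x i) (α i))) < ε

/-- `Y` is an M-ideal in `X`: there is an L-projection on `X*` whose kernel is the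
annihilator of `Y`. -/
def IsMIdeal {X : Type*} [NormedAddCommGroup X] [NormedSpace ℝ X]
    (Y : Subspace ℝ X) : Prop :=
  ∃ P : (X →L[ℝ] ℝ) →L[ℝ] (X →L[ℝ] ℝ),
    (∀ f, P (P f) = P f) ∧
    (∀ f, ‖f‖ = ‖P f‖ + ‖f - P f‖) ∧
    (∀ f, P f = 0 ↔ ∀ y ∈ Y, f y = 0)

/-- `Y` is a strict ideal in `X`: there is a norm-one projection `P` on `X*` with kernel
the annihilator of `Y` whose range has weak-star dense unit ball in the unit ball of `X*`. -/
def IsStrictIdeal {X : Type*} [NormedAddCommGroup X] [NormedSpace ℝ X]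
    (Y : Subspace ℝ X) : Prop :=
  ∃ P : (X →L[ℝ] ℝ) →L[ℝ] (X →L[ℝ] ℝ),
    ‖P‖ = 1 ∧
    (∀ f, P (P f) = P f) ∧
    (∀ f, P f = 0 ↔ ∀ y ∈ Y, f y = 0) ∧
    closedBall (0 : X →L[ℝ] ℝ) 1 ⊆
      @closure _ (wstarTopology X) (Set.range P ∩ closedBall (0 : X →L[ℝ] ℝ) 1)


/-!
A norm-one functional `F` on `X ⊕₁ Y` has norm `max ‖F ∘ inl‖ ‖F ∘ inr‖`, so one of its two
restrictions has norm one. In a convex combination `∑ lᵢ Sᵢ` of slices of the ball of `X ⊕₁ Y`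
of diameter `< ε`, either the slices whose functional restricts to a norm-one functional on `X`
carry total weight `L ≥ 1/2`, or the remaining ones, all restricting to norm-one functionals on
`Y`, do. Say `X`: restricting those slices to `X` and dividing their weights by `L` gives a
combination of slices of `B_X`. Embedding it back into `X ⊕₁ Y` and filling the other indices
with fixed points of their slices multiplies distances by `L` and lands in `∑ lᵢ Sᵢ`, so the
new combination has diameter at most `ε / L ≤ 2ε`.
-/

open Finset

lemma forall_gt_or_forall_gt_of_monotone {α : Type*} [LinearOrder α] {a : α} {P Q : α → Prop}
    (hP : Monotone P) (hQ : Monotone Q) (h : ∀ x > a, P x ∨ Q x) :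
    (∀ x > a, P x) ∨ (∀ x > a, Q x) := by
  by_contra! ⟨⟨x, hx, hPx⟩, ⟨y, hy, hQy⟩⟩
  rcases h (min x y) (lt_min hx hy) with hPm | hQm
  · exact hPx (hP (min_le_left x y) hPm)
  · exact hQy (hQ (min_le_right x y) hQm)

lemma combSlices_subset_of_convex {W : Type*} [NormedAddCommGroup W] [NormedSpace ℝ W]
    {n : ℕ} {l : Fin n → ℝ} {S : Fin n → Set W} {s : Set W} (hs : Convex ℝ s)
    (hl : ∀ i, 0 ≤ l i) (hsum : ∑ i, l i = 1) (hS : ∀ i, S i ⊆ s) : combSlices l S ⊆ s := by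
  rintro _ ⟨v, hv, rfl⟩
  exact hs.sum_mem (fun i _ => hl i) hsum fun i _ => hS i (hv i)

/-- `BSCSP X` is definitionally `∀ ε > 0, HasSmallCombSlices X ε`. -/
def HasSmallCombSlices (X : Type*) [NormedAddCommGroup X] [NormedSpace ℝ X] (ε : ℝ) : Prop :=
  ∃ (n : ℕ) (f : Fin n → (X →L[ℝ] ℝ)) (α l : Fin n → ℝ),
    (∀ i, ‖f i‖ = 1) ∧ (∀ i, 0 < α i) ∧ (∀ i, 0 ≤ l i) ∧ (∑ i, l i = 1) ∧
    diam (combSlices l (fun i => ballSlice X (f i) (α i))) < ε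

lemma hasSmallCombSlices_monotone (X : Type*) [NormedAddCommGroup X] [NormedSpace ℝ X] :
    Monotone (HasSmallCombSlices X) := by
  rintro ε δ hεδ ⟨n, f, α, l, hf, hα, hl, hsum, hdiam⟩
  exact ⟨n, f, α, l, hf, hα, hl, hsum, hdiam.trans_le hεδ⟩

section Slices

variable {W Z : Type*} [NormedAddCommGroup W] [NormedSpace ℝ W]
  [NormedAddCommGroup Z] [NormedSpace ℝ Z]

lemma ballSlice_nonempty {f : W →L[ℝ] ℝ} (hf : ‖f‖ = 1) {α : ℝ} (hα : 0 < α) :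
    (ballSlice W f α).Nonempty := by
  obtain ⟨x, hx, hfx⟩ := f.exists_lt_apply_of_lt_opNorm (r := 1 - α) (by linarith)
  rcases lt_abs.mp hfx with hpos | hneg
  · exact ⟨x, mem_closedBall_zero_iff.mpr hx.le, hpos⟩
  · exact ⟨-x, mem_closedBall_zero_iff.mpr ((norm_neg x).trans_lt hx).le, by simpa using hneg⟩

lemma isBounded_combSlices_ballSlice {n : ℕ} {f : Fin n → (W →L[ℝ] ℝ)} {α l : Fin n → ℝ}
    (hl : ∀ i, 0 ≤ l i) (hsum : ∑ i, l i = 1) :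
    Bornology.IsBounded (combSlices l fun i => ballSlice W (f i) (α i)) :=
  isBounded_closedBall.subset <|
    combSlices_subset_of_convex (convex_closedBall 0 1) hl hsum fun _ _ hx => hx.1

lemma mapsTo_ballSlice_comp (j : W →ₗᵢ[ℝ] Z) (F : Z →L[ℝ] ℝ) (α : ℝ) :
    Set.MapsTo j (ballSlice W (F.comp j.toContinuousLinearMap) α) (ballSlice Z F α) :=
  fun _ hx => ⟨by simpa using hx.1, hx.2⟩

lemma sum_smul_ite_sub_sum_smul_ite {𝓕 : Type*} [FunLike 𝓕 W Z] [LinearMapClass 𝓕 ℝ W Z]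
    (j : 𝓕) {n : ℕ} (l : Fin n → ℝ) (A : Finset (Fin n))
    (hL : ∑ i ∈ A, l i ≠ 0) (v v' : Fin n → W) (z : Fin n → Z) :
    ∑ i, l i • (if i ∈ A then j (v i) else z i) - ∑ i, l i • (if i ∈ A then j (v' i) else z i) =
      (∑ i ∈ A, l i) • j (∑ i, (if i ∈ A then l i / ∑ i ∈ A, l i else 0) • v i -
        ∑ i, (if i ∈ A then l i / ∑ i ∈ A, l i else 0) • v' i) := by
  simp only [← sum_sub_distrib, ← smul_sub, map_sum, map_smul, smul_sum, smul_smul]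
  refine sum_congr rfl fun i _ => ?_
  split_ifs
  · rw [mul_div_cancel₀ _ hL, map_sub]
  · simp

theorem hasSmallCombSlices_of_isometry (j : W →ₗᵢ[ℝ] Z) {n : ℕ} {F : Fin n → (Z →L[ℝ] ℝ)}
    {α l : Fin n → ℝ} (hF : ∀ i, ‖F i‖ = 1) (hα : ∀ i, 0 < α i) (hl : ∀ i, 0 ≤ l i)
    (hsum : ∑ i, l i = 1) {A : Finset (Fin n)}
    (hA : ∀ i ∈ A, ‖(F i).comp j.toContinuousLinearMap‖ = 1) (hLA : 0 < ∑ i ∈ A, l i) {ε : ℝ}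
    (hdiam : diam (combSlices l fun i => ballSlice Z (F i) (α i)) < (∑ i ∈ A, l i) * ε) :
    HasSmallCombSlices W ε := by
  classical
  set L := ∑ i ∈ A, l i
  obtain ⟨i₀, hi₀, -⟩ := exists_ne_zero_of_sum_ne_zero hLA.ne'
  -- indices outside `A` get weight zero and a copy of the slice at `i₀`
  set σ : Fin n → Fin n := fun i => if i ∈ A then i else i₀
  have hσA : ∀ i, σ i ∈ A := fun i => by by_cases hi : i ∈ A <;> simp [σ, hi, hi₀]
  set μ : Fin n → ℝ := fun i => if i ∈ A then l i / L else 0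
  refine ⟨n, fun i => (F (σ i)).comp j.toContinuousLinearMap, fun i => α (σ i), μ,
    fun i => hA _ (hσA i), fun i => hα _, fun i => ?_, ?_, ?_⟩
  · by_cases hi : i ∈ A <;> simp [μ, hi, div_nonneg (hl i) hLA.le]
  · rw [sum_ite_mem, univ_inter, ← sum_div, div_self hLA.ne']
  choose z hz using fun i => ballSlice_nonempty (hF i) (hα i)
  have hlift : ∀ v : Fin n → W, (∀ i, v i ∈ ballSlice W ((F (σ i)).comp j.toContinuousLinearMap)
      (α (σ i))) → ∀ i, (if i ∈ A then j (v i) else z i) ∈ ballSlice Z (F i) (α i) := by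
    intro v hv i
    split_ifs with hi
    · simpa [σ, hi] using mapsTo_ballSlice_comp j _ _ (hv i)
    · exact hz i
  refine (diam_le_of_forall_dist_le (by positivity) ?_).trans_lt
    ((div_lt_iff₀' hLA).mpr hdiam)
  rintro _ ⟨v, hv, rfl⟩ _ ⟨v', hv', rfl⟩
  rw [le_div_iff₀' hLA]
  calc L * dist (∑ i, μ i • v i) (∑ i, μ i • v' i)
      = dist (∑ i, l i • (if i ∈ A then j (v i) else z i))
          (∑ i, l i • (if i ∈ A then j (v' i) else z i)) := by
        rw [dist_eq_norm, dist_eq_norm, sum_smul_ite_sub_sum_smul_ite j l A hLA.ne',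
          norm_smul, Real.norm_of_nonneg hLA.le]
        exact congrArg (L * ·) (j.norm_map _).symm
    _ ≤ _ := dist_le_diam_of_mem (isBounded_combSlices_ballSlice hl hsum)
        ⟨_, hlift v hv, rfl⟩ ⟨_, hlift v' hv', rfl⟩

end Slices

namespace WithLp

variable (p : ℝ≥0∞) [Fact (1 ≤ p)] (X Y : Type*) [NormedAddCommGroup X] [NormedSpace ℝ X]
  [NormedAddCommGroup Y] [NormedSpace ℝ Y]

def inlₗᵢ : X →ₗᵢ[ℝ] WithLp p (X × Y) where
  toLinearMap := (WithLp.linearEquiv p ℝ (X × Y)).symm.toLinearMap ∘ₗ LinearMap.inl ℝ X Y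
  norm_map' := norm_toLp_fst p X Y

def inrₗᵢ : Y →ₗᵢ[ℝ] WithLp p (X × Y) where
  toLinearMap := (WithLp.linearEquiv p ℝ (X × Y)).symm.toLinearMap ∘ₗ LinearMap.inr ℝ X Y
  norm_map' := norm_toLp_snd p X Y

variable {X Y}

lemma inlₗᵢ_fst_add_inrₗᵢ_snd (z : WithLp p (X × Y)) : inlₗᵢ p X Y z.fst + inrₗᵢ p X Y z.snd = z :=
  WithLp.ofLp_injective _ (Prod.ext (add_zero _) (zero_add _))

lemma opNorm_le_max_comp_inlₗᵢ_comp_inrₗᵢ {E : Type*} [NormedAddCommGroup E] [NormedSpace ℝ E]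
    (F : WithLp 1 (X × Y) →L[ℝ] E) :
    ‖F‖ ≤ max ‖F.comp (inlₗᵢ 1 X Y).toContinuousLinearMap‖
      ‖F.comp (inrₗᵢ 1 X Y).toContinuousLinearMap‖ := by
  set M := max ‖F.comp (inlₗᵢ 1 X Y).toContinuousLinearMap‖
    ‖F.comp (inrₗᵢ 1 X Y).toContinuousLinearMap‖
  refine F.opNorm_le_bound (le_max_of_le_left (norm_nonneg _)) fun z => ?_
  calc ‖F z‖ = ‖F.comp (inlₗᵢ 1 X Y).toContinuousLinearMap z.fst +
        F.comp (inrₗᵢ 1 X Y).toContinuousLinearMap z.snd‖ := by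
        simp only [ContinuousLinearMap.comp_apply, LinearIsometry.coe_toContinuousLinearMap,
          ← map_add, inlₗᵢ_fst_add_inrₗᵢ_snd]
    _ ≤ M * ‖z.fst‖ + M * ‖z.snd‖ := (norm_add_le _ _).trans (add_le_add
        ((ContinuousLinearMap.le_opNorm _ _).trans (by gcongr; exact le_max_left _ _))
        ((ContinuousLinearMap.le_opNorm _ _).trans (by gcongr; exact le_max_right _ _)))
    _ = M * ‖z‖ := by rw [prod_norm_eq_add (by norm_num)]; norm_num; ring

end WithLp

section L1Sum

open WithLp

variable {X Y : Type*} [NormedAddCommGroup X] [NormedSpace ℝ X]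
  [NormedAddCommGroup Y] [NormedSpace ℝ Y]

lemma norm_comp_inlₗᵢ_eq_one_or_norm_comp_inrₗᵢ_eq_one {F : WithLp 1 (X × Y) →L[ℝ] ℝ}
    (hF : ‖F‖ = 1) :
    ‖F.comp (inlₗᵢ 1 X Y).toContinuousLinearMap‖ = 1 ∨
      ‖F.comp (inrₗᵢ 1 X Y).toContinuousLinearMap‖ = 1 := by
  have hinl : ‖F.comp (inlₗᵢ 1 X Y).toContinuousLinearMap‖ ≤ 1 :=
    (F.opNorm_comp_le _).trans (by simpa [hF] using LinearIsometry.norm_toContinuousLinearMap_le _)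
  have hinr : ‖F.comp (inrₗᵢ 1 X Y).toContinuousLinearMap‖ ≤ 1 :=
    (F.opNorm_comp_le _).trans (by simpa [hF] using LinearIsometry.norm_toContinuousLinearMap_le _)
  rcases le_max_iff.mp (hF ▸ opNorm_le_max_comp_inlₗᵢ_comp_inrₗᵢ F) with h | h
  · exact .inl (hinl.antisymm h)
  · exact .inr (hinr.antisymm h)

lemma hasSmallCombSlices_or_of_withLp_one {ε : ℝ} (h : HasSmallCombSlices (WithLp 1 (X × Y)) ε) :
    HasSmallCombSlices X (2 * ε) ∨ HasSmallCombSlices Y (2 * ε) := by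
  classical
  obtain ⟨n, F, α, l, hF, hα, hl, hsum, hdiam⟩ := h
  set A := univ.filter fun i => ‖(F i).comp (inlₗᵢ 1 X Y).toContinuousLinearMap‖ = 1
  have hsplit : ∑ i ∈ A, l i + ∑ i ∈ Aᶜ, l i = 1 := by rw [sum_add_sum_compl, hsum]
  have hdiam_le : ∀ L : ℝ, 1 / 2 ≤ L →
      diam (combSlices l fun i => ballSlice _ (F i) (α i)) < L * (2 * ε) := fun L hL =>
    hdiam.trans_le (by nlinarith [hdiam.trans_le' diam_nonneg])
  rcases le_or_gt (1 / 2) (∑ i ∈ A, l i) with hA | hA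
  · exact .inl <| hasSmallCombSlices_of_isometry (inlₗᵢ 1 X Y) hF hα hl hsum
      (fun i hi => (mem_filter.mp hi).2) (by linarith) (hdiam_le _ hA)
  · refine .inr <| hasSmallCombSlices_of_isometry (inrₗᵢ 1 X Y) hF hα hl hsum (A := Aᶜ)
      (fun i hi => ?_) (by linarith) (hdiam_le _ (by linarith))
    have hiA : ¬ ‖(F i).comp (inlₗᵢ 1 X Y).toContinuousLinearMap‖ = 1 := by simpa [A] using hi
    exact (norm_comp_inlₗᵢ_eq_one_or_norm_comp_inrₗᵢ_eq_one (hF i)).resolve_left hiA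

end L1Sum

theorem bscsp_prod_l1_general (X Y : Type*)
    [NormedAddCommGroup X] [NormedSpace ℝ X]
    [NormedAddCommGroup Y] [NormedSpace ℝ Y]
    (h : BSCSP (WithLp 1 (X × Y))) :
    BSCSP X ∨ BSCSP Y :=
  forall_gt_or_forall_gt_of_monotone (P := HasSmallCombSlices X) (Q := HasSmallCombSlices Y)
    (hasSmallCombSlices_monotone X) (hasSmallCombSlices_monotone Y) fun ε hε => by
      simpa only [mul_div_cancel₀ ε two_ne_zero] using
        hasSmallCombSlices_or_of_withLp_one (h (ε / 2) (half_pos hε))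

/-- If `Z = X ⊕_1 Y` has the Ball Small Combination of Slices Property,
then `X` or `Y` has it. -/
theorem bscsp_prod_l1 (X Y : Type*)
    [NormedAddCommGroup X] [NormedSpace ℝ X] [CompleteSpace X]
    [NormedAddCommGroup Y] [NormedSpace ℝ Y] [CompleteSpace Y]
    (h : BSCSP (WithLp 1 (X × Y))) :
    BSCSP X ∨ BSCSP Y :=
  bscsp_prod_l1_general X Y h
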